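/- BLOCK-SOME dynamic-programming recursion: for a dyadic interval D with halves D_L, D_R and F ≥ 0, define z_D(F) as the minimum over families S of at most F pairwise-disjoint dyadic subintervals of D of Σ_{ip ∈ WL ∩ ∪S} w(ip) − Σ_{ip ∈ BL ∩ ∪S} b(ip), where w, b ≥ 0 are good and bad weights. Then z_D(0) = 0 and for F ≥ 1, z_D(F) = min( (g_D − b_D), min over n = 0,…,F of ( z_{D_L}(F−n) + z_{D_R}(n) ) ), where g_D = Σ_{ip ∈ WL ∩ D} w(ip) and b_D = Σ_{ip ∈ BL ∩ D} b(ip). -/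

import Mathlib

/-- `ip` lies in the dyadic interval of prefix `q = (p, l)` in `w`-bit address space:
`[p·2^(w−l), (p+1)·2^(w−l))`. -/
def inI (w : ℕ) (q : ℕ × ℕ) (ip : ℕ) : Prop :=
  q.1 * 2 ^ (w - q.2) ≤ ip ∧ ip < (q.1 + 1) * 2 ^ (w - q.2)

instance (w : ℕ) (q : ℕ × ℕ) (ip : ℕ) : Decidable (inI w q ip) := by
  unfold inI; infer_instance

/-- `(p, l)` is a valid prefix: `l ≤ w` and `p < 2^l`. -/
def ValidPrefix (w : ℕ) (q : ℕ × ℕ) : Prop := q.2 ≤ w ∧ q.1 < 2 ^ q.2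

/-- The dyadic intervals of the prefixes in `S` are pairwise disjoint. -/
def PairwiseDisjointI (w : ℕ) (S : Finset (ℕ × ℕ)) : Prop :=
  ∀ q ∈ S, ∀ q' ∈ S, q ≠ q' → ∀ ip, ¬(inI w q ip ∧ inI w q' ip)

/-- `zBS w BL WL bw wgt D F`: BLOCK-SOME optimum on `D` with at most `F` filters:
minimum of (good weight blocked) − (bad weight blocked) over families of at most `F`
pairwise-disjoint dyadic subintervals of `D`. -/
noncomputable def zBS (w : ℕ) (BL WL : Finset ℕ) (bw wgt : ℕ → ℝ) (D : ℕ × ℕ) (F : ℕ) : ℝ :=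
  sInf {x : ℝ | ∃ S : Finset (ℕ × ℕ),
    (∀ q ∈ S, ValidPrefix w q ∧ ∀ ip, inI w q ip → inI w D ip) ∧
    S.card ≤ F ∧ PairwiseDisjointI w S ∧
    x = (∑ q ∈ S, ∑ ip ∈ WL.filter (fun ip => inI w q ip), wgt ip) -
        (∑ q ∈ S, ∑ ip ∈ BL.filter (fun ip => inI w q ip), bw ip)}

/-!
An optimal family either contains `D` itself, and then disjointness forces it to be `{D}`, or
each of its intervals lies in `D_L` or in `D_R`, since two dyadic intervals are nested or
disjoint; it then splits into families on the two halves with at most `F − n` and `n` members.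
Conversely, families on the two halves combine into one on `D`. Every infimum involved is a
minimum, because there are only finitely many families of valid prefixes.
-/

lemma bddBelow_setOf_exists_le_eq (f : ℕ → ℝ) (F : ℕ) :
    BddBelow {x | ∃ n, n ≤ F ∧ x = f n} := by
  refine ((Set.finite_Iic F).image f).bddBelow.mono ?_
  rintro _ ⟨n, hn, rfl⟩
  exact ⟨n, hn, rfl⟩

section Dyadic

variable {w : ℕ}

lemma inI_iff_div {q : ℕ × ℕ} {ip : ℕ} : inI w q ip ↔ ip / 2 ^ (w - q.2) = q.1 := by
  have := Nat.two_pow_pos (w - q.2)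
  rw [Nat.div_eq_iff this, inI, add_mul, one_mul]
  omega

lemma inI_start (q : ℕ × ℕ) : inI w q (q.1 * 2 ^ (w - q.2)) := by
  rw [inI_iff_div, Nat.mul_div_cancel _ (Nat.two_pow_pos _)]

lemma eq_of_inI_of_inI {l a b ip : ℕ} (ha : inI w (a, l) ip) (hb : inI w (b, l) ip) :
    a = b := by
  rw [inI_iff_div] at ha hb
  exact ha.symm.trans hb

lemma inI_ancestor {l m a ip : ℕ} (hlm : l ≤ m) (hmw : m ≤ w) (h : inI w (a, m) ip) :
    inI w (a / 2 ^ (m - l), l) ip := by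
  rw [inI_iff_div] at h ⊢
  have hsplit : w - l = (w - m) + (m - l) := by omega
  simp only at h ⊢
  rw [← h, Nat.div_div_eq_div_mul, ← pow_add, hsplit]

lemma inI_parent {l c p ip : ℕ} (hl : l < w) (hc : c / 2 = p) (h : inI w (c, l + 1) ip) :
    inI w (p, l) ip := by
  simpa [hc] using inI_ancestor (Nat.le_succ l) hl h

lemma not_inI_left_and_right {p l ip : ℕ} :
    ¬(inI w (2 * p, l + 1) ip ∧ inI w (2 * p + 1, l + 1) ip) :=
  fun ⟨hL, hR⟩ => by have := eq_of_inI_of_inI hL hR; omega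

lemma le_of_inI_subset {a m p l : ℕ} (hmw : m ≤ w) (hlw : l ≤ w)
    (hsub : ∀ ip, inI w (a, m) ip → inI w (p, l) ip) : l ≤ m := by
  have hB : 0 < 2 ^ (w - m) := Nat.two_pow_pos _
  have hlast_mem : inI w (a, m) (a * 2 ^ (w - m) + 2 ^ (w - m) - 1) := by
    simp only [inI, add_mul, one_mul]
    omega
  set B := 2 ^ (w - m)
  set C := 2 ^ (w - l)
  have hfirst : p * C ≤ a * B := (hsub _ (inI_start (a, m))).1
  have hlast : a * B + B - 1 < (p + 1) * C := (hsub _ hlast_mem).2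
  have hBC : B ≤ C := by rw [add_mul, one_mul] at hlast; omega
  have := (Nat.pow_le_pow_iff_right (by norm_num)).mp hBC
  omega

lemma inI_left_or_right_of_subset {a m p l : ℕ} (hmw : m ≤ w) (hl : l < w)
    (hsub : ∀ ip, inI w (a, m) ip → inI w (p, l) ip) (hne : (a, m) ≠ (p, l)) :
    (∀ ip, inI w (a, m) ip → inI w (2 * p, l + 1) ip) ∨
      (∀ ip, inI w (a, m) ip → inI w (2 * p + 1, l + 1) ip) := by
  have hlm : l ≤ m := le_of_inI_subset hmw hl.le hsub
  have hm : l + 1 ≤ m := by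
    refine Nat.succ_le_of_lt (lt_of_le_of_ne hlm fun hml => hne ?_)
    subst hml
    rw [eq_of_inI_of_inI (inI_start (a, l)) (hsub _ (inI_start (a, l)))]
  set c := a / 2 ^ (m - (l + 1))
  have hc : ∀ ip, inI w (a, m) ip → inI w (c, l + 1) ip := fun ip => inI_ancestor hm hmw
  have hcp : c / 2 = p := eq_of_inI_of_inI (inI_parent hl rfl (hc _ (inI_start (a, m))))
    (hsub _ (inI_start (a, m)))
  rcases Nat.even_or_odd' c with ⟨k, hk | hk⟩
  · left
    obtain rfl : k = p := by omega
    rwa [← hk]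
  · right
    obtain rfl : k = p := by omega
    rwa [← hk]

end Dyadic

def blockCost (w : ℕ) (BL WL : Finset ℕ) (bw wgt : ℕ → ℝ) (S : Finset (ℕ × ℕ)) :
    ℝ :=
  (∑ q ∈ S, ∑ ip ∈ WL.filter (fun ip => inI w q ip), wgt ip) -
    (∑ q ∈ S, ∑ ip ∈ BL.filter (fun ip => inI w q ip), bw ip)

def IsBlockFamily (w : ℕ) (D : ℕ × ℕ) (F : ℕ) (S : Finset (ℕ × ℕ)) : Prop :=
  (∀ q ∈ S, ValidPrefix w q ∧ ∀ ip, inI w q ip → inI w D ip) ∧ S.card ≤ F ∧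
    PairwiseDisjointI w S

section Families

variable {w : ℕ} {BL WL : Finset ℕ} {bw wgt : ℕ → ℝ} {D : ℕ × ℕ} {F : ℕ}
  {S SL SR : Finset (ℕ × ℕ)}

lemma blockCost_singleton (q : ℕ × ℕ) :
    blockCost w BL WL bw wgt {q} =
      (∑ ip ∈ WL.filter (fun ip => inI w q ip), wgt ip) -
        (∑ ip ∈ BL.filter (fun ip => inI w q ip), bw ip) := by
  simp [blockCost]

lemma blockCost_union (h : Disjoint SL SR) :
    blockCost w BL WL bw wgt (SL ∪ SR) =
      blockCost w BL WL bw wgt SL + blockCost w BL WL bw wgt SR := by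
  simp only [blockCost, Finset.sum_union h]
  ring

lemma IsBlockFamily.subset_range (h : IsBlockFamily w D F S) :
    S ⊆ Finset.range (2 ^ w) ×ˢ Finset.range (w + 1) := by
  intro q hq
  obtain ⟨hlw, hp⟩ := (h.1 q hq).1
  simp only [Finset.mem_product, Finset.mem_range]
  exact ⟨hp.trans_le (Nat.pow_le_pow_right two_pos hlw), Nat.lt_succ_of_le hlw⟩

lemma IsBlockFamily.mono {T : Finset (ℕ × ℕ)} {D' : ℕ × ℕ} {F' : ℕ}
    (h : IsBlockFamily w D F S) (hT : T ⊆ S)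
    (hD' : ∀ q ∈ T, ∀ ip, inI w q ip → inI w D' ip) (hF' : T.card ≤ F') :
    IsBlockFamily w D' F' T :=
  ⟨fun q hq => ⟨(h.1 q (hT hq)).1, hD' q hq⟩, hF',
    fun q hq q' hq' => h.2.2 q (hT hq) q' (hT hq')⟩

lemma isBlockFamily_singleton (hD : ValidPrefix w D) (hF : 1 ≤ F) :
    IsBlockFamily w D F {D} := by
  refine ⟨fun q hq => ?_, by simpa using hF, fun q hq q' hq' hne => ?_⟩
  · rw [Finset.mem_singleton.mp hq]
    exact ⟨hD, fun _ h => h⟩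
  · rw [Finset.mem_singleton] at hq hq'
    exact absurd (hq.trans hq'.symm) hne

lemma IsBlockFamily.eq_singleton_of_mem (h : IsBlockFamily w D F S) (hD : D ∈ S) :
    S = {D} := by
  refine Finset.eq_singleton_iff_unique_mem.mpr ⟨hD, fun q hq => by_contra fun hne => ?_⟩
  exact h.2.2 q hq D hD hne _ ⟨inI_start q, (h.1 q hq).2 _ (inI_start q)⟩

lemma disjoint_of_isBlockFamily_left_right {p l FL FR : ℕ}
    (hL : IsBlockFamily w (2 * p, l + 1) FL SL)
    (hR : IsBlockFamily w (2 * p + 1, l + 1) FR SR) : Disjoint SL SR :=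
  Finset.disjoint_left.mpr fun q hqL hqR =>
    not_inI_left_and_right ⟨(hL.1 q hqL).2 _ (inI_start q), (hR.1 q hqR).2 _ (inI_start q)⟩

lemma IsBlockFamily.union {p l FL FR : ℕ} (hl : l < w)
    (hL : IsBlockFamily w (2 * p, l + 1) FL SL)
    (hR : IsBlockFamily w (2 * p + 1, l + 1) FR SR) :
    IsBlockFamily w (p, l) (FL + FR) (SL ∪ SR) := by
  have hdisj := disjoint_of_isBlockFamily_left_right hL hR
  refine ⟨fun q hq => ?_, ?_, fun q hq q' hq' hne ip hip => ?_⟩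
  · rcases Finset.mem_union.mp hq with h | h
    · exact ⟨(hL.1 q h).1, fun ip hip => inI_parent hl (by omega) ((hL.1 q h).2 ip hip)⟩
    · exact ⟨(hR.1 q h).1, fun ip hip => inI_parent hl (by omega) ((hR.1 q h).2 ip hip)⟩
  · rw [Finset.card_union_of_disjoint hdisj]
    exact add_le_add hL.2.1 hR.2.1
  · rcases Finset.mem_union.mp hq with h | h <;> rcases Finset.mem_union.mp hq' with h' | h'
    · exact hL.2.2 q h q' h' hne ip hip
    · exact not_inI_left_and_right ⟨(hL.1 q h).2 ip hip.1, (hR.1 q' h').2 ip hip.2⟩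
    · exact not_inI_left_and_right ⟨(hL.1 q' h').2 ip hip.2, (hR.1 q h).2 ip hip.1⟩
    · exact hR.2.2 q h q' h' hne ip hip

lemma IsBlockFamily.exists_split {p l : ℕ} (hl : l < w) (h : IsBlockFamily w (p, l) F S)
    (hD : (p, l) ∉ S) :
    ∃ n ≤ F, ∃ SL SR, IsBlockFamily w (2 * p, l + 1) (F - n) SL ∧
      IsBlockFamily w (2 * p + 1, l + 1) n SR ∧ SL ∪ SR = S := by
  classical
  set P : ℕ × ℕ → Prop := fun q => ∀ ip, inI w q ip → inI w (2 * p, l + 1) ip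
  have hright :
      ∀ q ∈ S.filter (¬P ·), ∀ ip, inI w q ip → inI w (2 * p + 1, l + 1) ip := by
    intro q hq
    obtain ⟨hqS, hqP⟩ := Finset.mem_filter.mp hq
    have hne : q ≠ (p, l) := fun hq => hD (hq ▸ hqS)
    exact (inI_left_or_right_of_subset (h.1 q hqS).1.1 hl (h.1 q hqS).2 hne).resolve_left hqP
  have hcard := Finset.card_filter_add_card_filter_not (s := S) P
  have hSF := h.2.1
  refine ⟨(S.filter (¬P ·)).card, by omega, S.filter P, S.filter (¬P ·),
    h.mono (Finset.filter_subset _ _) (fun q hq => (Finset.mem_filter.mp hq).2) (by omega),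
    h.mono (Finset.filter_subset _ _) hright le_rfl, Finset.filter_union_filter_not_eq P S⟩

end Families

section Optimum

variable {w : ℕ} {BL WL : Finset ℕ} {bw wgt : ℕ → ℝ} {D : ℕ × ℕ} {F : ℕ}
  {S : Finset (ℕ × ℕ)}

lemma zBS_eq_sInf_image :
    zBS w BL WL bw wgt D F = sInf (blockCost w BL WL bw wgt '' {S | IsBlockFamily w D F S}) := by
  simp only [zBS, IsBlockFamily, blockCost, Set.image, Set.mem_ofPred_eq, and_assoc, eq_comm]

lemma finite_setOf_isBlockFamily (w : ℕ) (D : ℕ × ℕ) (F : ℕ) :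
    {S | IsBlockFamily w D F S}.Finite :=
  (Set.finite_Iic _).subset fun _ h => IsBlockFamily.subset_range h

lemma zBS_le_blockCost (h : IsBlockFamily w D F S) :
    zBS w BL WL bw wgt D F ≤ blockCost w BL WL bw wgt S := by
  rw [zBS_eq_sInf_image]
  exact csInf_le ((finite_setOf_isBlockFamily w D F).image _).bddBelow ⟨S, h, rfl⟩

lemma exists_isBlockFamily_blockCost_eq_zBS (w : ℕ) (BL WL : Finset ℕ) (bw wgt : ℕ → ℝ)
    (D : ℕ × ℕ) (F : ℕ) :
    ∃ S, IsBlockFamily w D F S ∧ blockCost w BL WL bw wgt S = zBS w BL WL bw wgt D F := by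
  rw [zBS_eq_sInf_image]
  have hempty : IsBlockFamily w D F ∅ := by simp [IsBlockFamily, PairwiseDisjointI]
  exact (Set.Nonempty.image _ ⟨∅, hempty⟩).csInf_mem
    ((finite_setOf_isBlockFamily w D F).image _)

lemma zBS_zero (w : ℕ) (BL WL : Finset ℕ) (bw wgt : ℕ → ℝ) (D : ℕ × ℕ) :
    zBS w BL WL bw wgt D 0 = 0 := by
  obtain ⟨S, hS, hcost⟩ := exists_isBlockFamily_blockCost_eq_zBS w BL WL bw wgt D 0
  rw [← hcost, Finset.card_eq_zero.mp (Nat.le_zero.mp hS.2.1)]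
  simp [blockCost]

lemma zBS_le_add_left_right {p l n : ℕ} (hl : l < w) (hn : n ≤ F) :
    zBS w BL WL bw wgt (p, l) F ≤
      zBS w BL WL bw wgt (2 * p, l + 1) (F - n) + zBS w BL WL bw wgt (2 * p + 1, l + 1) n := by
  obtain ⟨SL, hL, hcostL⟩ :=
    exists_isBlockFamily_blockCost_eq_zBS w BL WL bw wgt (2 * p, l + 1) (F - n)
  obtain ⟨SR, hR, hcostR⟩ :=
    exists_isBlockFamily_blockCost_eq_zBS w BL WL bw wgt (2 * p + 1, l + 1) n
  have hunion := hL.union hl hR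
  rw [Nat.sub_add_cancel hn] at hunion
  calc zBS w BL WL bw wgt (p, l) F ≤ blockCost w BL WL bw wgt (SL ∪ SR) :=
        zBS_le_blockCost hunion
    _ = _ := by rw [blockCost_union (disjoint_of_isBlockFamily_left_right hL hR), hcostL, hcostR]

end Optimum

theorem stmt11_general (w p l F : ℕ) (BL WL : Finset ℕ) (bw wgt : ℕ → ℝ)
    (hl : l < w) (hp : p < 2 ^ l) (hF : 1 ≤ F) :
    zBS w BL WL bw wgt (p, l) 0 = 0 ∧
    zBS w BL WL bw wgt (p, l) F =
      min ((∑ ip ∈ WL.filter (fun ip => inI w (p, l) ip), wgt ip) -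
            (∑ ip ∈ BL.filter (fun ip => inI w (p, l) ip), bw ip))
        (sInf {x : ℝ | ∃ n, n ≤ F ∧
          x = zBS w BL WL bw wgt (2 * p, l + 1) (F - n) +
              zBS w BL WL bw wgt (2 * p + 1, l + 1) n}) := by
  refine ⟨zBS_zero w BL WL bw wgt (p, l), le_antisymm (le_min ?_ ?_) ?_⟩
  · rw [← blockCost_singleton]
    exact zBS_le_blockCost (isBlockFamily_singleton ⟨hl.le, hp⟩ hF)
  · exact le_csInf ⟨_, 0, F.zero_le, rfl⟩ fun _ ⟨_, hn, hx⟩ =>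
      hx ▸ zBS_le_add_left_right hl hn
  · obtain ⟨S, hS, hcost⟩ := exists_isBlockFamily_blockCost_eq_zBS w BL WL bw wgt (p, l) F
    rw [← hcost]
    by_cases hD : (p, l) ∈ S
    · rw [hS.eq_singleton_of_mem hD, blockCost_singleton]
      exact min_le_left _ _
    · obtain ⟨n, hn, SL, SR, hL, hR, rfl⟩ := hS.exists_split hl hD
      rw [blockCost_union (disjoint_of_isBlockFamily_left_right hL hR)]
      exact (min_le_right _ _).trans <|
        (csInf_le (bddBelow_setOf_exists_le_eq _ F) ⟨n, hn, rfl⟩).trans <|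
          add_le_add (zBS_le_blockCost hL) (zBS_le_blockCost hR)

/-- BLOCK-SOME dynamic-programming recursion: `z_D(0) = 0`, and for `F ≥ 1`,
`z_D(F) = min(g_D − b_D, min over n = 0,…,F of z_{D_L}(F−n) + z_{D_R}(n))`. -/
theorem stmt11 (w p l F : ℕ) (BL WL : Finset ℕ) (bw wgt : ℕ → ℝ)
    (hb : ∀ ip ∈ BL, 0 ≤ bw ip) (hwgt : ∀ ip ∈ WL, 0 ≤ wgt ip)
    (hl : l < w) (hp : p < 2 ^ l) (hF : 1 ≤ F) :
    zBS w BL WL bw wgt (p, l) 0 = 0 ∧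
    zBS w BL WL bw wgt (p, l) F =
      min ((∑ ip ∈ WL.filter (fun ip => inI w (p, l) ip), wgt ip) -
            (∑ ip ∈ BL.filter (fun ip => inI w (p, l) ip), bw ip))
        (sInf {x : ℝ | ∃ n, n ≤ F ∧
          x = zBS w BL WL bw wgt (2 * p, l + 1) (F - n) +
              zBS w BL WL bw wgt (2 * p + 1, l + 1) n}) :=
  stmt11_general w p l F BL WL bw wgt hl hp hF
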